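/- arXiv:2212.08900 — 2 statements merged into one kernel-verified Lean document; each statement's English description precedes it below -/
import Mathlib

section
/- Combined prediction-error decrease for the nominal–estimate pair (eq. (16)): Let V_s be a function satisfying the i-ISS CLF decrease V_s(f_w(x,u,0), f_w(x̃, π(x̃,x,u), w̃)) ≤ ρ_s · V_s(x,x̃) + σ_{s,w}(‖w̃‖) with σ_{s,w} class-K (hence monotone). Suppose the observer update from estimate x̂ can be written as x̂⁺ = f_w(x̂, u, ŵ) for some ŵ ∈ ℝ^q whose norm is bounded by the observer-correction bound: ‖ŵ‖ ≤ c · (σ_{o,L}(V_o(x̂, x)) + σ_{o,L,w}(‖w‖)), with σ_{o,L}, σ_{o,L,w} class-K, c > 0, and ‖w‖ ≤ w̄. Then, defining the class-K functions σ_{s,o}(r) := σ_{s,w}(2c·σ_{o,L}(r)) and σ_{s,o,w}(r) := σ_{s,w}(2c·σ_{o,L,w}(r)), for every nominal state x̄ and nominal input ū, with u = π(x̂, x̄, ū), x̄⁺ = f_w(x̄, ū, 0) and x̂⁺ = f_w(x̂, u, ŵ): V_s(x̄⁺, x̂⁺) ≤ ρ_s · V_s(x̄, x̂) + σ_{s,o}(V_o(x̂,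 x)) + σ_{s,o,w}(w̄). -/
/-! The observer correction `ŵ` acts on the estimate as a disturbance of size at most
`c (σ_{o,L}(V_o) + σ_{o,L,w}(‖w‖))`. Feeding it into the i-ISS decrease of `V_s` and splitting
`σ_{s,w}(a + b) ≤ σ_{s,w}(2a) + σ_{s,w}(2b)` separates the estimation-error and disturbance
contributions; the latter is then bounded through `‖w‖ ≤ w̄` by monotonicity. -/

abbrev Vec (n : ℕ) := EuclideanSpace ℝ (Fin n)

/-- Class `𝒦` is only required on the nonnegative reals. -/
def ClassK (σ : ℝ → ℝ) : Prop :=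
  ContinuousOn σ (Set.Ici 0) ∧ StrictMonoOn σ (Set.Ici 0) ∧ σ 0 = 0

namespace ClassK

variable {σ : ℝ → ℝ}

lemma mono (h : ClassK σ) {a b : ℝ} (ha : 0 ≤ a) (hab : a ≤ b) : σ a ≤ σ b :=
  h.2.1.monotoneOn ha (ha.trans hab) hab

lemma nonneg (h : ClassK σ) {a : ℝ} (ha : 0 ≤ a) : 0 ≤ σ a :=
  h.2.2 ▸ h.mono le_rfl ha

lemma apply_add_le (h : ClassK σ) {a b : ℝ} (ha : 0 ≤ a) (hb : 0 ≤ b) :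
    σ (a + b) ≤ σ (2 * a) + σ (2 * b) := by
  rcases le_total a b with hab | hba
  · linarith [h.mono (by positivity) (by linarith : a + b ≤ 2 * b),
      h.nonneg (by positivity : 0 ≤ 2 * a)]
  · linarith [h.mono (by positivity) (by linarith : a + b ≤ 2 * a),
      h.nonneg (by positivity : 0 ≤ 2 * b)]

lemma apply_le_of_le_mul_add (h : ClassK σ) {r c a b : ℝ} (hr : 0 ≤ r) (hc : 0 ≤ c)
    (ha : 0 ≤ a) (hb : 0 ≤ b) (hrab : r ≤ c * (a + b)) :
    σ r ≤ σ (2 * c * a) + σ (2 * c * b) :=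
  calc σ r ≤ σ (c * a + c * b) := h.mono hr (by linarith)
    _ ≤ σ (2 * (c * a)) + σ (2 * (c * b)) := h.apply_add_le (by positivity) (by positivity)
    _ = σ (2 * c * a) + σ (2 * c * b) := by ring_nf

end ClassK

theorem combined_prediction_error_decrease_general
    {nx m q : ℕ}
    (fw : Vec nx → Vec m → Vec q → Vec nx)
    (Vs Vo : Vec nx → Vec nx → ℝ)
    (hVo_nonneg : ∀ a b, 0 ≤ Vo a b)
    (ρs : ℝ)
    (σsw σoL σoLw : ℝ → ℝ)
    (hσsw : ClassK σsw) (hσoL : ClassK σoL) (hσoLw : ClassK σoLw)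
    (π : Vec nx → Vec nx → Vec m → Vec m)
    (hCLF : ∀ (x xt : Vec nx) (u : Vec m) (wt : Vec q),
      Vs (fw x u 0) (fw xt (π xt x u) wt) ≤ ρs * Vs x xt + σsw ‖wt‖)
    (c : ℝ) (hc : 0 < c)
    (wbar : ℝ)
    (x xhat : Vec nx) (w : Vec q) (hwb : ‖w‖ ≤ wbar)
    (what : Vec q)
    (hwhat : ‖what‖ ≤ c * (σoL (Vo xhat x) + σoLw ‖w‖))
    (xbar : Vec nx) (ubar : Vec m) :
    Vs (fw xbar ubar 0) (fw xhat (π xhat xbar ubar) what)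
      ≤ ρs * Vs xbar xhat + σsw (2 * c * σoL (Vo xhat x))
        + σsw (2 * c * σoLw wbar) := by
  have hσoLw_w : 0 ≤ σoLw ‖w‖ := hσoLw.nonneg (norm_nonneg w)
  have hσoLw_wbar : σoLw ‖w‖ ≤ σoLw wbar := hσoLw.mono (norm_nonneg w) hwb
  calc Vs (fw xbar ubar 0) (fw xhat (π xhat xbar ubar) what)
      ≤ ρs * Vs xbar xhat + σsw ‖what‖ := hCLF xbar xhat ubar what
    _ ≤ ρs * Vs xbar xhat + (σsw (2 * c * σoL (Vo xhat x)) + σsw (2 * c * σoLw ‖w‖)) := by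
        gcongr
        exact hσsw.apply_le_of_le_mul_add (norm_nonneg what) hc.le
          (hσoL.nonneg (hVo_nonneg xhat x)) hσoLw_w hwhat
    _ ≤ ρs * Vs xbar xhat + σsw (2 * c * σoL (Vo xhat x)) + σsw (2 * c * σoLw wbar) := by
        have := hσsw.mono (by positivity) (by gcongr : 2 * c * σoLw ‖w‖ ≤ 2 * c * σoLw wbar)
        linarith

/-- Combined prediction-error decrease for the nominal–estimate pair (eq. (16)):
with `u = π(x̂, x̄, ū)`, nominal update `x̄⁺ = f_w(x̄, ū, 0)` and observer update
`x̂⁺ = f_w(x̂, u, ŵ)` where `‖ŵ‖ ≤ c (σ_{o,L}(V_o(x̂, x)) + σ_{o,L,w}(‖w‖))` and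
`‖w‖ ≤ w̄`, one has
`V_s(x̄⁺, x̂⁺) ≤ ρ_s V_s(x̄, x̂) + σ_{s,o}(V_o(x̂, x)) + σ_{s,o,w}(w̄)` with the
class-`𝒦` functions `σ_{s,o}(r) = σ_{s,w}(2c σ_{o,L}(r))` and
`σ_{s,o,w}(r) = σ_{s,w}(2c σ_{o,L,w}(r))`. -/
theorem combined_prediction_error_decrease
    {nx m q : ℕ}
    (fw : Vec nx → Vec m → Vec q → Vec nx)
    (Vs Vo : Vec nx → Vec nx → ℝ)
    (hVs_nonneg : ∀ a b, 0 ≤ Vs a b) (hVo_nonneg : ∀ a b, 0 ≤ Vo a b)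
    (ρs : ℝ) (hρs : ρs ∈ Set.Ioo (0 : ℝ) 1)
    (σsw σoL σoLw : ℝ → ℝ)
    (hσsw : ClassK σsw) (hσoL : ClassK σoL) (hσoLw : ClassK σoLw)
    (π : Vec nx → Vec nx → Vec m → Vec m)
    (hCLF : ∀ (x xt : Vec nx) (u : Vec m) (wt : Vec q),
      Vs (fw x u 0) (fw xt (π xt x u) wt) ≤ ρs * Vs x xt + σsw ‖wt‖)
    (c : ℝ) (hc : 0 < c)
    (wbar : ℝ) (hwbar : 0 ≤ wbar)
    (x xhat : Vec nx) (w : Vec q) (hwb : ‖w‖ ≤ wbar)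
    (what : Vec q)
    (hwhat : ‖what‖ ≤ c * (σoL (Vo xhat x) + σoLw ‖w‖))
    (xbar : Vec nx) (ubar : Vec m) :
    Vs (fw xbar ubar 0) (fw xhat (π xhat xbar ubar) what)
      ≤ ρs * Vs xbar xhat + σsw (2 * c * σoL (Vo xhat x))
        + σsw (2 * c * σoLw wbar) :=
  combined_prediction_error_decrease_general fw Vs Vo hVo_nonneg ρs σsw σoL σoLw hσsw hσoL hσoLw π
    hCLF c hc wbar x xhat w hwb what hwhat xbar ubar
end

section
/- Reduced-horizon shift feasibility (key step in the proof of Theorem 1): Assume σ_{s,o} is monotonically increasing and S_f is monotone in the bound components (if (x̄, ē, s̄) ∈ S_f and 0 ≤ ē' ≤ ē, 0 ≤ s̄' ≤ s̄, then (x̄, ē', s̄') ∈ S_f). Suppose (x̄_0, (ū_0, …, ū_{N−1})) is feasible for the RPOF-SF problem at estimate x̂ with bound ē and horizon N ≥ 2, and let the next-step estimate x̂' and bound ē' satisfy ē' ≤ ρ_o · ē + σ_{o,w}(w̄) and V_s(x̄_1, x̂') ≤ ρ_s · V_s(x̄_0, x̂) + σ_{s,o}(ē) + σ_{s,o,w}(w̄),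 where x̄_1 = f(x̄_0, ū_0). Then the shifted candidate (x̄_1, (ū_1, …, ū_{N−1})) is feasible for the RPOF-SF problem at estimate x̂' with bound ē' and horizon N − 1. -/
/-- The nominal trajectory `x̄_{i+1} = f(x̄_i, ū_i)` from initial state `x0`. -/
def nomTraj {X U : Type*} (f : X → U → X) (x0 : X) (u : ℕ → U) : ℕ → X
  | 0 => x0
  | i + 1 => f (nomTraj f x0 u i) (u i)

/-- The propagated estimation-error bound
`ē_j = ρ_o^j ē + ((1 − ρ_o^j)/(1 − ρ_o)) σ_{o,w}(w̄)` (here `g = σ_{o,w}(w̄)`). -/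
noncomputable def ebarSeq (ρo g e : ℝ) (j : ℕ) : ℝ :=
  ρo ^ j * e + ((1 - ρo ^ j) / (1 - ρo)) * g

/-- The scalar tube sizes `s̄_0 = s0`, `s̄_{i+1} = ρ_s s̄_i + σ_{s,o}(ē_i) + σ_{s,o,w}(w̄)`. -/
noncomputable def tubeSeq (ρs : ℝ) (σso σsow : ℝ → ℝ) (wbar s0 : ℝ) (e : ℕ → ℝ) : ℕ → ℝ
  | 0 => s0
  | i + 1 => ρs * tubeSeq ρs σso σsow wbar s0 e i + σso (e i) + σsow wbar

/-- Feasibility predicate for the RPOF-SF open-loop problem (19): given horizon `N`,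
state estimate `x̂` and estimation-error bound `ē`, a nominal initial state `x̄_0` and
inputs `ū_0, …, ū_{N−1}` are feasible if, with `x̄_{i+1} = f(x̄_i, ū_i)`,
`ē_j = ρ_o^j ē + ((1 − ρ_o^j)/(1 − ρ_o)) σ_{o,w}(w̄)`, `s̄_0 = V_s(x̄_0, x̂)` and
`s̄_{i+1} = ρ_s s̄_i + σ_{s,o}(ē_i) + σ_{s,o,w}(w̄)`:
(i) for every `i < N` and all `z, ẑ` with `V_s(x̄_i, ẑ) ≤ s̄_i` and `V_o(ẑ, z) ≤ ē_i`,
`(z, π(ẑ, x̄_i, ū_i)) ∈ Z`; and (ii) `(x̄_N, ē_N, s̄_N) ∈ S_f`. -/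
def Feasible {nx m : ℕ}
    (f : Vec nx → Vec m → Vec nx)
    (Vs Vo : Vec nx → Vec nx → ℝ)
    (ρo ρs wbar : ℝ)
    (σow σso σsow : ℝ → ℝ)
    (π : Vec nx → Vec nx → Vec m → Vec m)
    (Z : Set (Vec nx × Vec m))
    (Sf : Set (Vec nx × ℝ × ℝ))
    (N : ℕ) (xhat : Vec nx) (e : ℝ)
    (xbar0 : Vec nx) (ubar : ℕ → Vec m) : Prop :=
  (∀ i < N, ∀ z zhat : Vec nx,
      Vs (nomTraj f xbar0 ubar i) zhat
        ≤ tubeSeq ρs σso σsow wbar (Vs xbar0 xhat) (ebarSeq ρo (σow wbar) e) i →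
      Vo zhat z ≤ ebarSeq ρo (σow wbar) e i →
      (z, π zhat (nomTraj f xbar0 ubar i) (ubar i)) ∈ Z) ∧
  (nomTraj f xbar0 ubar N, ebarSeq ρo (σow wbar) e N,
    tubeSeq ρs σso σsow wbar (Vs xbar0 xhat) (ebarSeq ρo (σow wbar) e) N) ∈ Sf

lemma ClassK.monotoneOn {σ : ℝ → ℝ} (hσ : ClassK σ) : MonotoneOn σ (Set.Ici 0) :=
  hσ.2.1.monotoneOn

lemma ClassK.nonneg_s10 {σ : ℝ → ℝ} (hσ : ClassK σ) {x : ℝ} (hx : 0 ≤ x) : 0 ≤ σ x :=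
  hσ.2.2 ▸ hσ.monotoneOn Set.self_mem_Ici hx hx

lemma nomTraj_shift {X U : Type*} (f : X → U → X) (x0 : X) (u : ℕ → U) (i : ℕ) :
    nomTraj f (f x0 (u 0)) (fun j => u (j + 1)) i = nomTraj f x0 u (i + 1) := by
  induction i with
  | zero => rfl
  | succ k ih => simp only [nomTraj, ih]

lemma ebarSeq_zero (ρo g e : ℝ) : ebarSeq ρo g e 0 = e := by
  simp [ebarSeq]

lemma ebarSeq_succ {ρo : ℝ} (hρo : ρo ≠ 1) (g e : ℝ) (j : ℕ) :
    ebarSeq ρo g e (j + 1) = ρo * ebarSeq ρo g e j + g := by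
  have : 1 - ρo ≠ 0 := sub_ne_zero.mpr hρo.symm
  unfold ebarSeq
  field_simp
  ring

lemma ebarSeq_nonneg {ρo g e : ℝ} (hρo : ρo ≠ 1) (hρo0 : 0 ≤ ρo) (hg : 0 ≤ g) (he : 0 ≤ e)
    (j : ℕ) : 0 ≤ ebarSeq ρo g e j := by
  induction j with
  | zero => rwa [ebarSeq_zero]
  | succ j ih => rw [ebarSeq_succ hρo]; positivity

lemma ebarSeq_le_ebarSeq_succ {ρo g e e' : ℝ} (hρo : ρo ≠ 1) (hρo0 : 0 ≤ ρo)
    (he' : e' ≤ ρo * e + g) (j : ℕ) : ebarSeq ρo g e' j ≤ ebarSeq ρo g e (j + 1) := by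
  induction j with
  | zero => rwa [ebarSeq_zero, ebarSeq_succ hρo, ebarSeq_zero]
  | succ j ih =>
    rw [ebarSeq_succ hρo, ebarSeq_succ hρo _ _ (j + 1)]
    gcongr

lemma tubeSeq_nonneg {ρs wbar s0 : ℝ} {σso σsow : ℝ → ℝ} {e : ℕ → ℝ} (hρs : 0 ≤ ρs)
    (hs0 : 0 ≤ s0) (hσso : ∀ k, 0 ≤ σso (e k)) (hσsow : 0 ≤ σsow wbar) (i : ℕ) :
    0 ≤ tubeSeq ρs σso σsow wbar s0 e i := by
  induction i with
  | zero => exact hs0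
  | succ k ih =>
    have := hσso k
    simp only [tubeSeq]
    positivity

lemma tubeSeq_le_tubeSeq_succ {ρs wbar s0 s0' : ℝ} {σso σsow : ℝ → ℝ} {e e' : ℕ → ℝ}
    (hρs : 0 ≤ ρs) (hs0' : s0' ≤ ρs * s0 + σso (e 0) + σsow wbar)
    (hσso : ∀ k, σso (e' k) ≤ σso (e (k + 1))) (i : ℕ) :
    tubeSeq ρs σso σsow wbar s0' e' i ≤ tubeSeq ρs σso σsow wbar s0 e (i + 1) := by
  induction i with
  | zero => exact hs0'
  | succ k ih =>
    simp only [tubeSeq] at ih ⊢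
    gcongr
    exact hσso k

theorem reduced_horizon_shift_feasibility_general
    {nx m : ℕ}
    (f : Vec nx → Vec m → Vec nx)
    (Vs Vo : Vec nx → Vec nx → ℝ)
    (hVs_nonneg : ∀ a b, 0 ≤ Vs a b)
    (ρo ρs : ℝ) (hρo : ρo ∈ Set.Ioo (0 : ℝ) 1) (hρs : ρs ∈ Set.Ioo (0 : ℝ) 1)
    (wbar : ℝ) (hwbar : 0 ≤ wbar)
    (σow σso σsow : ℝ → ℝ)
    (hσow : ClassK σow) (hσso : ClassK σso) (hσsow : ClassK σsow)
    (π : Vec nx → Vec nx → Vec m → Vec m)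
    (Z : Set (Vec nx × Vec m))
    (Sf : Set (Vec nx × ℝ × ℝ))
    -- `S_f` is monotone in the bound components
    (hSf_mono : ∀ (xb : Vec nx) (e s e' s' : ℝ), (xb, e, s) ∈ Sf →
      0 ≤ e' → e' ≤ e → 0 ≤ s' → s' ≤ s → (xb, e', s') ∈ Sf)
    (N : ℕ) (hN : 2 ≤ N)
    (xhat : Vec nx) (e : ℝ)
    (xbar0 : Vec nx) (ubar : ℕ → Vec m)
    (hfeas : Feasible f Vs Vo ρo ρs wbar σow σso σsow π Z Sf N xhat e xbar0 ubar)
    (xhat' : Vec nx) (e' : ℝ) (he'_nonneg : 0 ≤ e')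
    (he' : e' ≤ ρo * e + σow wbar)
    (hVs' : Vs (f xbar0 (ubar 0)) xhat'
      ≤ ρs * Vs xbar0 xhat + σso e + σsow wbar) :
    Feasible f Vs Vo ρo ρs wbar σow σso σsow π Z Sf (N - 1) xhat' e'
      (f xbar0 (ubar 0)) (fun i => ubar (i + 1)) := by
  set g := σow wbar
  have hρo1 : ρo ≠ 1 := hρo.2.ne
  have hebar : ∀ j, ebarSeq ρo g e' j ≤ ebarSeq ρo g e (j + 1) :=
    ebarSeq_le_ebarSeq_succ hρo1 hρo.1.le he'
  have hebar_nonneg : ∀ j, 0 ≤ ebarSeq ρo g e' j :=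
    ebarSeq_nonneg hρo1 hρo.1.le (hσow.nonneg_s10 hwbar) he'_nonneg
  have htube : ∀ i,
      tubeSeq ρs σso σsow wbar (Vs (f xbar0 (ubar 0)) xhat') (ebarSeq ρo g e') i
        ≤ tubeSeq ρs σso σsow wbar (Vs xbar0 xhat) (ebarSeq ρo g e) (i + 1) :=
    tubeSeq_le_tubeSeq_succ hρs.1.le (by rwa [ebarSeq_zero])
      fun k => hσso.monotoneOn (hebar_nonneg k) ((hebar_nonneg k).trans (hebar k)) (hebar k)
  have htube_nonneg := tubeSeq_nonneg hρs.1.le (hVs_nonneg (f xbar0 (ubar 0)) xhat')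
    (fun k => hσso.nonneg_s10 (hebar_nonneg k)) (hσsow.nonneg_s10 hwbar)
  obtain ⟨hconstr, hterm⟩ := hfeas
  refine ⟨fun i hi z zhat hzs hze => ?_, ?_⟩
  · rw [nomTraj_shift] at hzs ⊢
    exact hconstr (i + 1) (by omega) z zhat (hzs.trans (htube i)) (hze.trans (hebar i))
  · obtain ⟨n, rfl⟩ : ∃ n, N = n + 1 := ⟨N - 1, by omega⟩
    rw [Nat.add_sub_cancel, nomTraj_shift]
    exact hSf_mono _ _ _ _ _ hterm (hebar_nonneg n) (hebar n) (htube_nonneg n) (htube n)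

/-- Reduced-horizon shift feasibility (key step in the proof of Theorem 1): if
`(x̄_0, (ū_0, …, ū_{N−1}))` is feasible at estimate `x̂` with bound `ē` and horizon
`N ≥ 2`, and the next-step estimate `x̂'` and bound `ē'` satisfy
`ē' ≤ ρ_o ē + σ_{o,w}(w̄)` and
`V_s(x̄_1, x̂') ≤ ρ_s V_s(x̄_0, x̂) + σ_{s,o}(ē) + σ_{s,o,w}(w̄)` with
`x̄_1 = f(x̄_0, ū_0)`, then the shifted candidate `(x̄_1, (ū_1, …, ū_{N−1}))` is
feasible at `x̂'` with bound `ē'` and horizon `N − 1`. -/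
theorem reduced_horizon_shift_feasibility
    {nx m : ℕ}
    (f : Vec nx → Vec m → Vec nx)
    (Vs Vo : Vec nx → Vec nx → ℝ)
    (hVs_nonneg : ∀ a b, 0 ≤ Vs a b) (hVo_nonneg : ∀ a b, 0 ≤ Vo a b)
    (ρo ρs : ℝ) (hρo : ρo ∈ Set.Ioo (0 : ℝ) 1) (hρs : ρs ∈ Set.Ioo (0 : ℝ) 1)
    (wbar : ℝ) (hwbar : 0 ≤ wbar)
    (σow σso σsow : ℝ → ℝ)
    (hσow : ClassK σow) (hσso : ClassK σso) (hσsow : ClassK σsow)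
    (π : Vec nx → Vec nx → Vec m → Vec m)
    (Z : Set (Vec nx × Vec m))
    (Sf : Set (Vec nx × ℝ × ℝ))
    -- `S_f` is monotone in the bound components
    (hSf_mono : ∀ (xb : Vec nx) (e s e' s' : ℝ), (xb, e, s) ∈ Sf →
      0 ≤ e' → e' ≤ e → 0 ≤ s' → s' ≤ s → (xb, e', s') ∈ Sf)
    (N : ℕ) (hN : 2 ≤ N)
    (xhat : Vec nx) (e : ℝ) (he_nonneg : 0 ≤ e)
    (xbar0 : Vec nx) (ubar : ℕ → Vec m)
    (hfeas : Feasible f Vs Vo ρo ρs wbar σow σso σsow π Z Sf N xhat e xbar0 ubar)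
    (xhat' : Vec nx) (e' : ℝ) (he'_nonneg : 0 ≤ e')
    (he' : e' ≤ ρo * e + σow wbar)
    (hVs' : Vs (f xbar0 (ubar 0)) xhat'
      ≤ ρs * Vs xbar0 xhat + σso e + σsow wbar) :
    Feasible f Vs Vo ρo ρs wbar σow σso σsow π Z Sf (N - 1) xhat' e'
      (f xbar0 (ubar 0)) (fun i => ubar (i + 1)) :=
  reduced_horizon_shift_feasibility_general f Vs Vo hVs_nonneg ρo ρs hρo hρs wbar hwbar σow σso σsow
    hσow hσso hσsow π Z Sf hSf_mono N hN xhat e xbar0 ubar hfeas xhat' e' he'_nonneg he' hVs'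
end
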